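/- Under the hypotheses of Theorem 1's proof (Λ linear, trace-preserving, positive, non-entangling, and λΛ(Φ₁)+(1−λ)Λ(|01⟩⟨01|) = λΦ₁+(1−λ)Φ₃ with λ ∈ (1/2,1)), it holds that tr(Φ₁Λ(|01⟩⟨01|)) = 1/2 and tr(Φ₃Λ(|01⟩⟨01|)) = 1/2. -/

import Mathlib

open Matrix Complex BigOperators
open scoped ComplexOrder

noncomputable section

/-- Standard basis ket of ℂ⁴ -/
def ket (k : Fin 4) : Fin 4 → ℂ := fun j => if j = k then 1 else 0

/-- Tensor product of two qubit vectors, with |ij⟩ ↦ index 2i+j -/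
def tens (ψ χ : Fin 2 → ℂ) : Fin 4 → ℂ :=
  ![ψ 0 * χ 0, ψ 0 * χ 1, ψ 1 * χ 0, ψ 1 * χ 1]

/-- Outer product |v⟩⟨v| -/
def proj (v : Fin 4 → ℂ) : Matrix (Fin 4) (Fin 4) ℂ :=
  Matrix.of fun i j => v i * star (v j)

/-- A qubit vector is a unit vector -/
def unit2 (ψ : Fin 2 → ℂ) : Prop := ∑ j, Complex.normSq (ψ j) = 1

/-- The four Bell vectors -/
def Bell : Fin 4 → (Fin 4 → ℂ) :=
  ![![1 / (Real.sqrt 2 : ℂ), 0, 0, 1 / (Real.sqrt 2 : ℂ)],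
    ![1 / (Real.sqrt 2 : ℂ), 0, 0, -(1 / (Real.sqrt 2 : ℂ))],
    ![0, 1 / (Real.sqrt 2 : ℂ), 1 / (Real.sqrt 2 : ℂ), 0],
    ![0, -(1 / (Real.sqrt 2 : ℂ)), 1 / (Real.sqrt 2 : ℂ), 0]]

/-- Bell projectors Φᵢ (indexed from 0: `Phi 0` is Φ₁, etc.) -/
def Phi (i : Fin 4) : Matrix (Fin 4) (Fin 4) ℂ := proj (Bell i)

/-- Separability of a two-qubit (4×4) matrix -/
def IsSepState (ρ : Matrix (Fin 4) (Fin 4) ℂ) : Prop :=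
  ∃ (n : ℕ) (p : Fin n → ℝ) (ψ χ : Fin n → Fin 2 → ℂ),
    (∀ i, 0 ≤ p i) ∧ (∑ i, p i = 1) ∧ (∀ i, unit2 (ψ i)) ∧ (∀ i, unit2 (χ i)) ∧
    ρ = ∑ i, (p i : ℂ) • proj (tens (ψ i) (χ i))

/-- Density matrix -/
def IsState (ρ : Matrix (Fin 4) (Fin 4) ℂ) : Prop := ρ.PosSemidef ∧ ρ.trace = 1

/-! Write `A = Λ Φ₁` and `B = Λ |01⟩⟨01|`. Pairing the hypothesis with `Φ₁` and `Φ₃` gives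
`λ tr(Φ₁A) + (1-λ) tr(Φ₁B) = λ` and `λ tr(Φ₃A) + (1-λ) tr(Φ₃B) = 1-λ`. Since the Bell projectors
resolve the identity and `A ≥ 0`, `tr(Φ₁A) + tr(Φ₃A) ≤ tr A = 1`, so adding the two equations yields
`tr(Φ₁B) + tr(Φ₃B) ≥ 1`. But `B` is separable, and by Cauchy–Schwarz a product vector has overlap at
most `1/2` with every Bell vector, so both overlaps equal `1/2`. -/

lemma proj_eq_vecMulVec (v : Fin 4 → ℂ) : proj v = vecMulVec v (star v) := rfl

lemma posSemidef_proj (v : Fin 4 → ℂ) : (proj v).PosSemidef :=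
  posSemidef_vecMulVec_self_star v

lemma trace_proj_mul (v : Fin 4 → ℂ) (σ : Matrix (Fin 4) (Fin 4) ℂ) :
    (proj v * σ).trace = star v ⬝ᵥ σ *ᵥ v := by
  rw [proj_eq_vecMulVec, vecMulVec_mul, trace_vecMulVec, dotProduct_comm, dotProduct_mulVec]

lemma trace_proj_mul_proj (u v : Fin 4 → ℂ) :
    (proj u * proj v).trace = normSq (star u ⬝ᵥ v) := by
  rw [trace_proj_mul, proj_eq_vecMulVec, vecMulVec_mulVec, dotProduct_smul,
    MulOpposite.smul_eq_mul_unop, MulOpposite.unop_op, star_dotProduct v u, Complex.star_def,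
    Complex.mul_conj]

lemma Matrix.PosSemidef.trace_proj_mul_nonneg {σ : Matrix (Fin 4) (Fin 4) ℂ} (hσ : σ.PosSemidef)
    (v : Fin 4 → ℂ) : 0 ≤ (proj v * σ).trace := by
  rw [trace_proj_mul]
  exact hσ.dotProduct_mulVec_nonneg v

lemma inv_sqrt_two_mul_inv_sqrt_two : (Real.sqrt 2 : ℂ)⁻¹ * (Real.sqrt 2 : ℂ)⁻¹ = 1 / 2 := by
  rw [← mul_inv, ← ofReal_mul, Real.mul_self_sqrt zero_le_two]
  norm_num

lemma star_Bell_dotProduct_Bell (i j : Fin 4) :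
    star (Bell i) ⬝ᵥ Bell j = if i = j then 1 else 0 := by
  fin_cases i <;> fin_cases j <;>
    simp [Bell, dotProduct, Fin.sum_univ_four, conj_ofReal, inv_sqrt_two_mul_inv_sqrt_two] <;>
    norm_num

lemma trace_Phi_mul_Phi (i j : Fin 4) : (Phi i * Phi j).trace = if i = j then 1 else 0 := by
  rw [Phi, Phi, trace_proj_mul_proj, star_Bell_dotProduct_Bell]
  split_ifs <;> simp

lemma trace_Phi (i : Fin 4) : (Phi i).trace = 1 := by
  rw [Phi, proj_eq_vecMulVec, trace_vecMulVec, dotProduct_comm, star_Bell_dotProduct_Bell, if_pos rfl]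

lemma sum_Phi : ∑ i, Phi i = 1 := by
  ext a b
  fin_cases a <;> fin_cases b <;>
    simp [Fin.sum_univ_four, Phi, proj, Bell, conj_ofReal, inv_sqrt_two_mul_inv_sqrt_two] <;>
    norm_num

lemma Matrix.PosSemidef.re_trace_Phi_mul_add_le {σ : Matrix (Fin 4) (Fin 4) ℂ}
    (hσ : σ.PosSemidef) {i j : Fin 4} (hij : i ≠ j) :
    (Phi i * σ).trace.re + (Phi j * σ).trace.re ≤ σ.trace.re := by
  have hsum : σ.trace.re = ∑ k, (Phi k * σ).trace.re := by
    conv_lhs => rw [← one_mul σ, ← sum_Phi, Finset.sum_mul, trace_sum, re_sum]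
  rw [hsum, ← Finset.sum_pair (f := fun k => (Phi k * σ).trace.re) hij]
  exact Finset.sum_le_sum_of_subset_of_nonneg (Finset.subset_univ _)
    fun k _ _ => (Complex.nonneg_iff.mp (hσ.trace_proj_mul_nonneg (Bell k))).1

lemma normSq_mul_add_mul_le (a b c d : ℂ) :
    normSq (a * c + b * d) ≤ (normSq a + normSq b) * (normSq c + normSq d) := by
  have lagrange : (normSq a + normSq b) * (normSq c + normSq d)
      = normSq (a * c + b * d) + normSq (a * starRingEnd ℂ d - b * starRingEnd ℂ c) := by
    simp only [normSq_apply, add_re, add_im, sub_re, sub_im, mul_re, mul_im, conj_re, conj_im]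
    ring
  rw [lagrange]
  exact le_add_of_nonneg_right (normSq_nonneg _)

lemma exists_star_Bell_dotProduct_tens (i : Fin 4) (ψ χ : Fin 2 → ℂ) :
    ∃ c d : ℂ, normSq c + normSq d = normSq (χ 0) + normSq (χ 1) ∧
      star (Bell i) ⬝ᵥ tens ψ χ = (Real.sqrt 2 : ℂ)⁻¹ * (ψ 0 * c + ψ 1 * d) := by
  fin_cases i
  · exact ⟨χ 0, χ 1, rfl, by simp [Bell, tens, dotProduct, Fin.sum_univ_four, conj_ofReal]; ring⟩
  · exact ⟨χ 0, -χ 1, by rw [normSq_neg],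
      by simp [Bell, tens, dotProduct, Fin.sum_univ_four, conj_ofReal]; ring⟩
  · exact ⟨χ 1, χ 0, add_comm _ _,
      by simp [Bell, tens, dotProduct, Fin.sum_univ_four, conj_ofReal]; ring⟩
  · exact ⟨-χ 1, χ 0, by rw [normSq_neg, add_comm],
      by simp [Bell, tens, dotProduct, Fin.sum_univ_four, conj_ofReal]; ring⟩

lemma normSq_star_Bell_dotProduct_tens_le (i : Fin 4) {ψ χ : Fin 2 → ℂ} (hψ : unit2 ψ)
    (hχ : unit2 χ) : normSq (star (Bell i) ⬝ᵥ tens ψ χ) ≤ 1 / 2 := by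
  rw [unit2, Fin.sum_univ_two] at hψ hχ
  obtain ⟨c, d, hcd, h⟩ := exists_star_Bell_dotProduct_tens i ψ χ
  have hsqrt : normSq ((Real.sqrt 2 : ℂ)⁻¹) = 1 / 2 := by
    rw [normSq_inv, normSq_ofReal, Real.mul_self_sqrt zero_le_two, one_div]
  rw [h, normSq_mul, hsqrt]
  have := normSq_mul_add_mul_le (ψ 0) (ψ 1) c d
  rw [hψ, hcd, hχ, one_mul] at this
  linarith

lemma IsSepState.re_trace_Phi_mul_le {σ : Matrix (Fin 4) (Fin 4) ℂ} (hσ : IsSepState σ)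
    (i : Fin 4) : (Phi i * σ).trace.re ≤ 1 / 2 := by
  obtain ⟨n, p, ψ, χ, hp, hp1, hψ, hχ, rfl⟩ := hσ
  calc (Phi i * ∑ k, (p k : ℂ) • proj (tens (ψ k) (χ k))).trace.re
      = ∑ k, p k * normSq (star (Bell i) ⬝ᵥ tens (ψ k) (χ k)) := by
        simp only [Finset.mul_sum, trace_sum, re_sum, Matrix.mul_smul, Matrix.trace_smul, Phi,
          trace_proj_mul_proj, smul_eq_mul, ← ofReal_mul, ofReal_re]
    _ ≤ ∑ k, p k * (1 / 2) := by
        gcongr with k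
        · exact hp k
        · exact normSq_star_Bell_dotProduct_tens_le i (hψ k) (hχ k)
    _ = 1 / 2 := by rw [← Finset.sum_mul, hp1, one_mul]

lemma isSepState_proj_tens {ψ χ : Fin 2 → ℂ} (hψ : unit2 ψ) (hχ : unit2 χ) :
    IsSepState (proj (tens ψ χ)) :=
  ⟨1, fun _ => 1, fun _ => ψ, fun _ => χ, fun _ => zero_le_one, by simp, fun _ => hψ,
    fun _ => hχ, by simp⟩

lemma ket_one_eq_tens : ket 1 = tens ![1, 0] ![0, 1] := by
  ext j; fin_cases j <;> simp [ket, tens]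

lemma isSepState_proj_ket_one : IsSepState (proj (ket 1)) := by
  rw [ket_one_eq_tens]
  exact isSepState_proj_tens (by simp [unit2]) (by simp [unit2])

lemma Matrix.PosSemidef.trace_Phi_mul_eq_re {σ : Matrix (Fin 4) (Fin 4) ℂ} (hσ : σ.PosSemidef)
    (i : Fin 4) : (Phi i * σ).trace = (Phi i * σ).trace.re :=
  eq_re_of_ofReal_le (r := 0) (by rw [ofReal_zero]; exact hσ.trace_proj_mul_nonneg (Bell i))

theorem forced_half_overlaps
    (Λ : Matrix (Fin 4) (Fin 4) ℂ →ₗ[ℂ] Matrix (Fin 4) (Fin 4) ℂ)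
    (htr : ∀ ρ, (Λ ρ).trace = ρ.trace)
    (hpos : ∀ ρ, ρ.PosSemidef → (Λ ρ).PosSemidef)
    (hne : ∀ ρ, IsSepState ρ → IsSepState (Λ ρ))
    (l : ℝ) (hl : 1 / 2 < l) (hl1 : l < 1)
    (heq : (l : ℂ) • Λ (Phi 0) + ((1 - l : ℝ) : ℂ) • Λ (proj (ket 1))
      = (l : ℂ) • Phi 0 + ((1 - l : ℝ) : ℂ) • Phi 2) :
    (Phi 0 * Λ (proj (ket 1))).trace = 1 / 2
      ∧ (Phi 2 * Λ (proj (ket 1))).trace = 1 / 2 := by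
  set A := Λ (Phi 0)
  set B := Λ (proj (ket 1))
  have hA : A.PosSemidef := hpos _ (posSemidef_proj _)
  have hB : B.PosSemidef := hpos _ (posSemidef_proj _)
  have hA_le : (Phi 0 * A).trace.re + (Phi 2 * A).trace.re ≤ 1 := by
    simpa [A, htr, trace_Phi] using hA.re_trace_Phi_mul_add_le (i := 0) (j := 2) (by decide)
  have hB_sep : IsSepState B := hne _ isSepState_proj_ket_one
  have hB1 := hB_sep.re_trace_Phi_mul_le 0
  have hB3 := hB_sep.re_trace_Phi_mul_le 2
  have overlap (i : Fin 4) : l * (Phi i * A).trace.re + (1 - l) * (Phi i * B).trace.re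
      = l * (Phi i * Phi 0).trace.re + (1 - l) * (Phi i * Phi 2).trace.re := by
    simpa [Matrix.mul_add, Matrix.mul_smul] using congrArg (fun M => (Phi i * M).trace.re) heq
  have h1 : l * (Phi 0 * A).trace.re + (1 - l) * (Phi 0 * B).trace.re = l := by
    simpa [trace_Phi_mul_Phi] using overlap 0
  have h3 : l * (Phi 2 * A).trace.re + (1 - l) * (Phi 2 * B).trace.re = 1 - l := by
    simpa [trace_Phi_mul_Phi] using overlap 2
  have hB_sum : 1 ≤ (Phi 0 * B).trace.re + (Phi 2 * B).trace.re :=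
    le_of_mul_le_mul_left (by linarith [mul_le_mul_of_nonneg_left hA_le (by linarith : 0 ≤ l)])
      (sub_pos.2 hl1)
  constructor
  · rw [hB.trace_Phi_mul_eq_re, show (Phi 0 * B).trace.re = 1 / 2 by linarith]; norm_num
  · rw [hB.trace_Phi_mul_eq_re, show (Phi 2 * B).trace.re = 1 / 2 by linarith]; norm_num
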